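/- Suppose v : ℤ → ℂ^k represents a point of the skew shaped positroid S°_{λ/μ} and let 1 ≤ a ≤ n−k with μ̄_a < λ̄_a. Then the intersection V(a, μ̄_a+1) ∩ W_{k−μ̄_a} is one-dimensional and spanned by v_{a+μ̄_a}. -/
import Mathlib


/-- The height `λ̄_a` of the `a`-th column (counted from the right) of the
partition `f = (f 1 ≥ ⋯ ≥ f k)` inside the `k × (n-k)` rectangle. -/
def colHeight (n k : ℕ) (f : ℕ → ℕ) (a : ℕ) : ℕ :=
  ((Finset.Icc 1 k).filter (fun i => n - k - a + 1 ≤ f i)).card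

/-- `b_i = n - k - μ_i + i`. -/
def bvec (n k : ℕ) (m : ℕ → ℕ) (i : ℕ) : ℕ := n - k - m i + i

/-- The short label `J(a,i) = {min (a+j-1) (b_j) : j = 1, …, i}`. -/
def shortLabel (n k : ℕ) (m : ℕ → ℕ) (a i : ℕ) : Finset ℕ :=
  (Finset.Icc 1 i).image (fun j => min (a + j - 1) (bvec n k m j))

/-- The label `I'(a,i) = J(a,i) ∪ {b_{i+1}, …, b_k}`. -/
def fullLabel (n k : ℕ) (m : ℕ → ℕ) (a i : ℕ) : Finset ℕ :=
  shortLabel n k m a i ∪ (Finset.Icc (i + 1) k).image (bvec n k m)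

/-- `I_μ = {b_1, …, b_k}`. -/
def Imu (n k : ℕ) (m : ℕ → ℕ) : Finset ℕ := (Finset.Icc 1 k).image (bvec n k m)

/-- The box `(a,i)` belongs to the skew diagram `λ/μ`. -/
def InSkew (n k : ℕ) (l m : ℕ → ℕ) (a i : ℕ) : Prop :=
  1 ≤ a ∧ a ≤ n - k ∧ 1 ≤ i ∧ i ≤ k ∧ colHeight n k m a < i ∧ i ≤ colHeight n k l a

/-- The box `(a,i)` belongs to the boundary ribbon `R(λ/μ)`. -/
def InRibbon (n k : ℕ) (l m : ℕ → ℕ) (a i : ℕ) : Prop :=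
  InSkew n k l m a i ∧ (a = 1 ∨ colHeight n k l (a - 1) ≤ i)

/-- `S` is the `r`-th entry of the Grassmann necklace `I_{λ/μ}`. -/
def IsNecklaceEntry (n k : ℕ) (l m : ℕ → ℕ) (r : ℕ) (S : Finset ℕ) : Prop :=
  (∃ a i, InRibbon n k l m a i ∧ r = a + i - 1 ∧ S = fullLabel n k m a i) ∨
  ((¬ ∃ a i, InRibbon n k l m a i ∧ r = a + i - 1) ∧ S = Imu n k m)

/-- The family `{v_j : j ∈ S}` is a basis of `ℂ^k`. -/
def IsBasisFam (k : ℕ) (v : ℤ → Fin k → ℂ) (S : Finset ℕ) : Prop :=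
  LinearIndependent ℂ (fun j : ↥S => v ((j : ℕ) : ℤ)) ∧
  Submodule.span ℂ ((fun j : ℕ => v (j : ℤ)) '' (S : Set ℕ)) = ⊤

/-- `v : ℤ → ℂ^k` represents a point of the skew shaped positroid `S°_{λ/μ}`. -/
def RepsPoint (n k : ℕ) (l m : ℕ → ℕ) (v : ℤ → Fin k → ℂ) : Prop :=
  (∀ j : ℤ, v (j + (n : ℤ)) = ((-1 : ℂ) ^ (k - 1)) • v j) ∧
  (∀ r ∈ Finset.Icc 1 n, ∀ S : Finset ℕ, IsNecklaceEntry n k l m r S → IsBasisFam k v S) ∧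
  (∀ a : ℕ, 1 ≤ a → a ≤ n - k →
    v ((a + colHeight n k m a : ℕ) : ℤ) ∈
      Submodule.span ℂ ((fun j : ℕ => v (j : ℤ)) ''
        ↑(Finset.Icc (a + colHeight n k m a + 1) (a + colHeight n k l a))))

/-- `V(a,i) = span{v_j : j ∈ J(a,i)}`. -/
noncomputable def Vspace (n k : ℕ) (m : ℕ → ℕ) (v : ℤ → Fin k → ℂ) (a i : ℕ) :
    Submodule ℂ (Fin k → ℂ) :=
  Submodule.span ℂ ((fun j : ℕ => v (j : ℤ)) '' ↑(shortLabel n k m a i))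

/-- `W^op_p = span(v_{b_1}, …, v_{b_p})`. -/
noncomputable def Wop (n k : ℕ) (m : ℕ → ℕ) (v : ℤ → Fin k → ℂ) (p : ℕ) :
    Submodule ℂ (Fin k → ℂ) :=
  Submodule.span ℂ ((fun j : ℕ => v (j : ℤ)) '' ↑((Finset.Icc 1 p).image (bvec n k m)))

/-- `W_p = span(v_{b_{k-p+1}}, …, v_{b_k})`. -/
noncomputable def Wsp (n k : ℕ) (m : ℕ → ℕ) (v : ℤ → Fin k → ℂ) (p : ℕ) :
    Submodule ℂ (Fin k → ℂ) :=
  Submodule.span ℂ ((fun j : ℕ => v (j : ℤ)) '' ↑((Finset.Icc (k - p + 1) k).image (bvec n k m)))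

lemma colHeight_le (n k : ℕ) (f : ℕ → ℕ) (a : ℕ) : colHeight n k f a ≤ k := by
  have h := Finset.card_filter_le (Finset.Icc 1 k) (fun i => n - k - a + 1 ≤ f i)
  have h2 : (Finset.Icc 1 k).card = k + 1 - 1 := Nat.card_Icc 1 k
  unfold colHeight
  omega

lemma colHeight_mono (n k : ℕ) (f : ℕ → ℕ) {a a' : ℕ} (h : a ≤ a') :
    colHeight n k f a ≤ colHeight n k f a' := by
  apply Finset.card_le_card
  intro i hi
  rw [Finset.mem_filter] at hi ⊢
  exact ⟨hi.1, by omega⟩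

lemma colHeight_le_iff (n k : ℕ) (f : ℕ → ℕ)
    (hmono : ∀ i j, 1 ≤ i → i ≤ j → j ≤ k → f j ≤ f i)
    {j a : ℕ} (hj1 : 1 ≤ j) (hjk : j ≤ k) :
    j ≤ colHeight n k f a ↔ n - k - a + 1 ≤ f j := by
  constructor
  · intro h
    by_contra hc
    push_neg at hc
    have hsub : (Finset.Icc 1 k).filter (fun i => n - k - a + 1 ≤ f i) ⊆
        Finset.Icc 1 (j - 1) := by
      intro i hi
      rw [Finset.mem_filter, Finset.mem_Icc] at hi
      rw [Finset.mem_Icc]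
      refine ⟨hi.1.1, ?_⟩
      by_contra hij
      push_neg at hij
      have := hmono j i hj1 (by omega) hi.1.2
      omega
    have hcard := Finset.card_le_card hsub
    have h2 : (Finset.Icc 1 (j-1)).card = (j-1) + 1 - 1 := Nat.card_Icc 1 (j-1)
    unfold colHeight at h
    omega
  · intro h
    have hsub : Finset.Icc 1 j ⊆ (Finset.Icc 1 k).filter (fun i => n - k - a + 1 ≤ f i) := by
      intro i hi
      rw [Finset.mem_Icc] at hi
      rw [Finset.mem_filter, Finset.mem_Icc]
      exact ⟨⟨hi.1, le_trans hi.2 hjk⟩, le_trans h (hmono i j hi.1 hi.2 hjk)⟩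
    have hcard := Finset.card_le_card hsub
    have h2 : (Finset.Icc 1 j).card = j + 1 - 1 := Nat.card_Icc 1 j
    unfold colHeight
    omega
theorem stmt17 (n k : ℕ) (l m : ℕ → ℕ)
    (hk : 0 < k) (hkn : k < n)
    (hlmono : ∀ i j, 1 ≤ i → i ≤ j → j ≤ k → l j ≤ l i)
    (hl1 : l 1 ≤ n - k)
    (hmmono : ∀ i j, 1 ≤ i → i ≤ j → j ≤ k → m j ≤ m i)
    (hml : ∀ i, 1 ≤ i → i ≤ k → m i ≤ l i)
    (v : ℤ → Fin k → ℂ) (hv : RepsPoint n k l m v)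
    (a : ℕ) (ha1 : 1 ≤ a) (ha2 : a ≤ n - k)
    (hlt : colHeight n k m a < colHeight n k l a) :
    Module.finrank ℂ
      ↥(Vspace n k m v a (colHeight n k m a + 1) ⊓
        Wsp n k m v (k - colHeight n k m a)) = 1 ∧
    Vspace n k m v a (colHeight n k m a + 1) ⊓ Wsp n k m v (k - colHeight n k m a) =
      Submodule.span ℂ {v ((a + colHeight n k m a : ℕ) : ℤ)} := by
  set c := colHeight n k m a with hc
  set d := colHeight n k l a with hd
  have hdk : d ≤ k := by rw [hd]; exact colHeight_le n k l a
  have hck : c < k := by omega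
  have hmN : ∀ i, 1 ≤ i → i ≤ k → m i ≤ n - k := fun i h1 h2 =>
    le_trans (hmmono 1 i le_rfl h1 h2) (le_trans (hml 1 le_rfl hk) hl1)
  have hchar : ∀ j a', 1 ≤ j → j ≤ k → a' ≤ n - k →
      (j ≤ colHeight n k m a' ↔ bvec n k m j ≤ a' + j - 1) := by
    intro j a' hj1 hjk ha'
    have hmj := hmN j hj1 hjk
    rw [colHeight_le_iff n k m hmmono hj1 hjk]
    unfold bvec
    omega
  have hbmono : ∀ i j, 1 ≤ i → i < j → j ≤ k → bvec n k m i < bvec n k m j := by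
    intro i j h1 h2 h3
    have hm1 := hmmono i j h1 (by omega) h3
    have hm2 := hmN i h1 (by omega)
    unfold bvec
    omega
  have h0 : colHeight n k m 0 = 0 := by
    unfold colHeight
    rw [Finset.card_eq_zero, Finset.filter_eq_empty_iff]
    intro i hi
    rw [Finset.mem_Icc] at hi
    have := hmN i hi.1 hi.2
    omega
  -- the basis I_mu
  have hBfam : IsBasisFam k v (Imu n k m) := by
    refine hv.2.1 n (Finset.mem_Icc.mpr ⟨by omega, le_rfl⟩) _ (Or.inr ⟨?_, rfl⟩)
    rintro ⟨a', i', ⟨⟨h1, h2, h3, h4, _, _⟩, _⟩, hr⟩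
    omega
  -- partition lemma
  have hpart : ∀ t, 1 ≤ t → t ≤ n →
      (∃ j, 1 ≤ j ∧ j ≤ k ∧ bvec n k m j = t) ∨
      (∃ a', 1 ≤ a' ∧ a' ≤ n - k ∧ a' + colHeight n k m a' = t) := by
    intro t ht1 htn
    by_cases hbig : n - k + colHeight n k m (n - k) < t
    · left
      have hj1 : 1 ≤ t - (n - k) := by omega
      have hjk : t - (n - k) ≤ k := by omega
      have hnb : ¬ bvec n k m (t - (n - k)) ≤ (n - k) + (t - (n - k)) - 1 := by
        intro hle
        have := (hchar (t - (n - k)) (n - k) hj1 hjk le_rfl).mpr hle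
        omega
      have hub : bvec n k m (t - (n - k)) ≤ (n - k) + (t - (n - k)) := by
        have := hmN (t - (n - k)) hj1 hjk
        unfold bvec
        omega
      exact ⟨t - (n - k), hj1, hjk, by omega⟩
    · push_neg at hbig
      have hAne : ((Finset.Icc 1 (n - k)).filter
          (fun a' => t ≤ a' + colHeight n k m a')).Nonempty :=
        ⟨n - k, by rw [Finset.mem_filter, Finset.mem_Icc]; exact ⟨⟨by omega, le_rfl⟩, hbig⟩⟩
      obtain ⟨a0, ha0A, hmin⟩ := Finset.exists_min_image _ id hAne
      rw [Finset.mem_filter, Finset.mem_Icc] at ha0A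
      obtain ⟨⟨ha01, ha0N⟩, ha0t⟩ := ha0A
      by_cases heq : a0 + colHeight n k m a0 = t
      · right; exact ⟨a0, ha01, ha0N, heq⟩
      · left
        have hprev : (a0 - 1) + colHeight n k m (a0 - 1) < t := by
          by_cases h1 : a0 = 1
          · have he : a0 - 1 = 0 := by omega
            rw [he, h0]
            omega
          · by_contra hcon
            push_neg at hcon
            have hmem : a0 - 1 ∈ (Finset.Icc 1 (n - k)).filter
                (fun a' => t ≤ a' + colHeight n k m a') := by
              rw [Finset.mem_filter, Finset.mem_Icc]
              exact ⟨⟨by omega, by omega⟩, hcon⟩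
            have hle' := hmin (a0 - 1) hmem
            simp only [id_eq] at hle'
            omega
        have hchk := colHeight_le n k m a0
        have hj1 : 1 ≤ t - a0 + 1 := by omega
        have hjle : t - a0 + 1 ≤ colHeight n k m a0 := by omega
        have hjk : t - a0 + 1 ≤ k := by omega
        have hle := (hchar (t - a0 + 1) a0 hj1 hjk ha0N).mp hjle
        have hgt : ¬ bvec n k m (t - a0 + 1) ≤ (a0 - 1) + (t - a0 + 1) - 1 := by
          intro hcon
          have := (hchar (t - a0 + 1) (a0 - 1) hj1 hjk (by omega)).mpr hcon
          omega
        exact ⟨t - a0 + 1, hj1, hjk, by omega⟩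
  -- W simplification
  have hW : Wsp n k m v (k - c) = Submodule.span ℂ
      ((fun j : ℕ => v (j : ℤ)) '' ↑((Finset.Icc (c + 1) k).image (bvec n k m))) := by
    unfold Wsp
    rw [show k - (k - c) + 1 = c + 1 by omega]
  -- membership in W for all large indices
  have hmemW : ∀ u t : ℕ, n < t + u → a + c < t → t ≤ n →
      v ((t : ℕ) : ℤ) ∈ Wsp n k m v (k - c) := by
    intro u
    induction u with
    | zero => intro t h1 h2 h3; omega
    | succ u ih =>
      intro t h1 h2 h3
      rcases hpart t (by omega) h3 with ⟨j, hj1, hjk, hbj⟩ | ⟨a', ha'1, ha'N, hg⟩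
      · have hjc : c + 1 ≤ j := by
          by_contra hcon
          push_neg at hcon
          have hb := (hchar j a hj1 hjk ha2).mp (by omega)
          omega
        rw [hW]
        apply Submodule.subset_span
        refine ⟨t, ?_, rfl⟩
        rw [Finset.mem_coe, Finset.mem_image]
        exact ⟨j, Finset.mem_Icc.mpr ⟨hjc, hjk⟩, hbj⟩
      · have hmem := hv.2.2 a' ha'1 ha'N
        rw [hg] at hmem
        refine Submodule.span_le.mpr ?_ hmem
        rintro x ⟨s, hs, rfl⟩
        rw [Finset.mem_coe, Finset.mem_Icc] at hs
        have hlk := colHeight_le n k l a'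
        exact ih s (by omega) (by omega) (by omega)
  -- min facts
  have hminfact : min (a + (c + 1) - 1) (bvec n k m (c + 1)) = a + c := by
    have hb : ¬ bvec n k m (c + 1) ≤ a + (c + 1) - 1 := by
      intro hle
      have := (hchar (c + 1) a (by omega) (by omega) ha2).mpr hle
      omega
    omega
  have h2fact : ∀ j, 1 ≤ j → j ≤ c → min (a + j - 1) (bvec n k m j) = bvec n k m j := by
    intro j hj1 hjc
    have hb := (hchar j a hj1 (by omega) ha2).mp (by omega)
    omega
  -- shortLabel simplification
  have hJ : shortLabel n k m a (c + 1) =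
      insert (a + c) ((Finset.Icc 1 c).image (bvec n k m)) := by
    unfold shortLabel
    ext x
    rw [Finset.mem_image, Finset.mem_insert, Finset.mem_image]
    constructor
    · rintro ⟨j, hj, rfl⟩
      rw [Finset.mem_Icc] at hj
      by_cases hjc : j = c + 1
      · subst hjc; left; exact hminfact
      · right; exact ⟨j, Finset.mem_Icc.mpr ⟨hj.1, by omega⟩, (h2fact j hj.1 (by omega)).symm⟩
    · rintro (rfl | ⟨j, hj, rfl⟩)
      · exact ⟨c + 1, Finset.mem_Icc.mpr ⟨by omega, le_rfl⟩, hminfact⟩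
      · rw [Finset.mem_Icc] at hj
        exact ⟨j, Finset.mem_Icc.mpr ⟨hj.1, by omega⟩, h2fact j hj.1 hj.2⟩
  -- the ribbon box (a, i0)
  set i0 := max (colHeight n k l (a - 1)) (c + 1) with hi0
  have hmono' : colHeight n k l (a - 1) ≤ d := by
    rw [hd]; exact colHeight_mono n k l (by omega)
  have hi0d : i0 ≤ d := by omega
  have hrib : InRibbon n k l m a i0 := by
    unfold InRibbon InSkew
    refine ⟨⟨ha1, ha2, by omega, by omega, by omega, by omega⟩, Or.inr (by omega)⟩
  have hfull : IsBasisFam k v (fullLabel n k m a i0) :=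
    hv.2.1 (a + i0 - 1) (Finset.mem_Icc.mpr ⟨by omega, by omega⟩) _
      (Or.inl ⟨a, i0, hrib, rfl, rfl⟩)
  have hmemfull : a + c ∈ fullLabel n k m a i0 := by
    unfold fullLabel shortLabel
    rw [Finset.mem_union, Finset.mem_image]
    exact Or.inl ⟨c + 1, Finset.mem_Icc.mpr ⟨by omega, by omega⟩, hminfact⟩
  have hvne : v ((a + c : ℕ) : ℤ) ≠ 0 := hfull.1.ne_zero ⟨a + c, hmemfull⟩
  -- v_{a+c} ∈ W
  have hPW : v ((a + c : ℕ) : ℤ) ∈ Wsp n k m v (k - c) := by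
    have hmem := hv.2.2 a ha1 ha2
    refine Submodule.span_le.mpr ?_ hmem
    rintro x ⟨s, hs, rfl⟩
    rw [Finset.mem_coe, Finset.mem_Icc] at hs
    exact hmemW (n + 1) s (by omega) (by omega) (by omega)
  -- V simplification
  have hV : Vspace n k m v a (c + 1) = Submodule.span ℂ
      ((fun j : ℕ => v (j : ℤ)) '' ↑(insert (a + c) ((Finset.Icc 1 c).image (bvec n k m)))) := by
    unfold Vspace
    rw [hJ]
  have hPV : v ((a + c : ℕ) : ℤ) ∈ Vspace n k m v a (c + 1) := by
    rw [hV]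
    exact Submodule.subset_span ⟨a + c, by simp, rfl⟩
  -- disjointness of U and W
  have hsubImu : ∀ lo hi : ℕ, 1 ≤ lo → hi ≤ k →
      (Finset.Icc lo hi).image (bvec n k m) ⊆ Imu n k m := by
    intro lo hi h1 h2 x hx
    rw [Finset.mem_image] at hx
    obtain ⟨j, hj, rfl⟩ := hx
    rw [Finset.mem_Icc] at hj
    unfold Imu
    rw [Finset.mem_image]
    exact ⟨j, Finset.mem_Icc.mpr ⟨by omega, by omega⟩, rfl⟩
  have himg : ∀ T : Finset ℕ, T ⊆ Imu n k m →
      (fun j : ℕ => v (j : ℤ)) '' ↑T =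
      (fun j : ↥(Imu n k m) => v ((j : ℕ) : ℤ)) '' {j : ↥(Imu n k m) | (j : ℕ) ∈ T} := by
    intro T hT
    ext x
    constructor
    · rintro ⟨t, ht, rfl⟩
      exact ⟨⟨t, hT ht⟩, ht, rfl⟩
    · rintro ⟨⟨t, htI⟩, ht, rfl⟩
      exact ⟨t, ht, rfl⟩
  have hdisj : Disjoint
      (Submodule.span ℂ ((fun j : ℕ => v (j : ℤ)) '' ↑((Finset.Icc 1 c).image (bvec n k m))))
      (Wsp n k m v (k - c)) := by
    rw [hW, himg _ (hsubImu 1 c le_rfl (by omega)), himg _ (hsubImu (c + 1) k (by omega) le_rfl)]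
    apply hBfam.1.disjoint_span_image
    rw [Set.disjoint_left]
    rintro ⟨x, hx⟩ h1 h2
    rw [Set.mem_setOf_eq, Finset.mem_image] at h1 h2
    obtain ⟨j1, hj1, he1⟩ := h1
    obtain ⟨j2, hj2, he2⟩ := h2
    rw [Finset.mem_Icc] at hj1 hj2
    have := hbmono j1 j2 hj1.1 (by omega) hj2.2
    omega
  -- main equality
  have hmain : Vspace n k m v a (c + 1) ⊓ Wsp n k m v (k - c) =
      Submodule.span ℂ {v ((a + c : ℕ) : ℤ)} := by
    apply le_antisymm
    · intro x hx
      rw [Submodule.mem_inf] at hx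
      obtain ⟨hxV, hxW⟩ := hx
      rw [hV, Finset.coe_insert, Set.image_insert_eq, Submodule.mem_span_insert] at hxV
      obtain ⟨α, z, hz, rfl⟩ := hxV
      have hzW : z ∈ Wsp n k m v (k - c) := by
        have h := Submodule.sub_mem _ hxW (Submodule.smul_mem _ α hPW)
        simpa using h
      have hz0 : z = 0 := Submodule.disjoint_def.mp hdisj z hz hzW
      rw [hz0, add_zero]
      exact Submodule.smul_mem _ α (Submodule.mem_span_singleton_self _)
    · rw [Submodule.span_le, Set.singleton_subset_iff, SetLike.mem_coe, Submodule.mem_inf]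
      exact ⟨hPV, hPW⟩
  refine ⟨?_, hmain⟩
  rw [hmain]
  exact finrank_span_singleton hvne
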